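/- arXiv:1201.6459 — 7 statements merged into one kernel-verified Lean document; each statement's English description precedes it below -/
import Mathlib

section
/- Let F be a field, let n, β, m be natural numbers, let D be a subset of Fin n, and let G be a matrix in Matrix (Fin n ⊕ Fin β) (Fin m) F. Then the following are equivalent: (i) for every x : Fin n → F and every z : Fin β → F such that x d ≠ 0 for some d ∈ D, the row vector Matrix.vecMul (Sum.elim x z) G is nonzero; (ii) for every d ∈ D, the standard basis vector Pi.single (Sum.inl d) (1 : F) of the space (Fin n ⊕ Fin β) → F lies in the F-linear span of the set of columns of G (the vectors fun i => G i c, for c : Fin m). -/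
/-!
Condition (i) says that every `y` with `y ᵥ* G = 0`, i.e. every `y` orthogonal to all columns
of `G`, vanishes at the demanded coordinates; as `y (Sum.inl d) = y ⬝ᵥ Pi.single (Sum.inl d) 1`,
this says that each demanded `Pi.single` is killed by every functional vanishing on the column
span. In finite dimension the dot product identifies vectors with functionals, and a subspace
is the common kernel of the functionals vanishing on it.
-/

open Matrix

theorem Submodule.mem_span_iff_forall_dotProduct_eq_zero {K ι : Type*} [Field K] [Fintype ι]
    [DecidableEq ι] (S : Set (ι → K)) (v : ι → K) :
    v ∈ span K S ↔ ∀ y : ι → K, (∀ s ∈ S, y ⬝ᵥ s = 0) → y ⬝ᵥ v = 0 := by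
  rw [← Subspace.forall_mem_dualAnnihilator_apply_eq_zero_iff,
    (dotProductEquiv K ι).surjective.forall]
  refine forall_congr' fun y => imp_congr_left ?_
  rw [mem_dualAnnihilator]
  exact span_le (p := LinearMap.ker (dotProductEquiv K ι y))

theorem forall_sumElim_vecMul_ne_zero_iff {K ι κ μ : Type*} [Field K] [Fintype ι] [Fintype κ]
    (D : Set ι) (G : Matrix (ι ⊕ κ) μ K) :
    (∀ (x : ι → K) (z : κ → K), (∃ d ∈ D, x d ≠ 0) → Sum.elim x z ᵥ* G ≠ 0) ↔
      ∀ y : ι ⊕ κ → K, y ᵥ* G = 0 → ∀ d ∈ D, y (Sum.inl d) = 0 := by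
  constructor
  · intro h y hy d hd
    by_contra hyd
    exact h (y ∘ Sum.inl) (y ∘ Sum.inr) ⟨d, hd, hyd⟩ (by rwa [Sum.elim_comp_inl_inr])
  · rintro h x z ⟨d, hd, hxd⟩ hxz
    exact hxd (h _ hxz d hd)

/-- Sink-decoding criterion for `β`-network-error detecting codes: every nonzero demanded
message leads to a nonzero sink output iff each demanded standard basis vector lies in the
span of the columns of the stacked transfer matrix `G`. -/
theorem stmt_0 (F : Type*) [Field F] (n β m : ℕ) (D : Set (Fin n))
    (G : Matrix (Fin n ⊕ Fin β) (Fin m) F) :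
    (∀ (x : Fin n → F) (z : Fin β → F), (∃ d ∈ D, x d ≠ 0) →
      Matrix.vecMul (Sum.elim x z) G ≠ 0) ↔
    (∀ d ∈ D, Pi.single (Sum.inl d : Fin n ⊕ Fin β) (1 : F) ∈
      Submodule.span F (Set.range fun c : Fin m => fun i : Fin n ⊕ Fin β => G i c)) := by
  simp only [forall_sumElim_vecMul_ne_zero_iff, Submodule.mem_span_iff_forall_dotProduct_eq_zero,
    Set.forall_mem_range, dotProduct_single_one, funext_iff, Pi.zero_apply]
  exact ⟨fun h d hd y hy => h y hy d hd, fun h y hy d hd => h d hd y hy⟩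
end

section
/- Let F be a field, let n, β, m be natural numbers, let D be a finite subset of Fin n, and let G be a matrix in Matrix (Fin n ⊕ Fin β) (Fin m) F. Assume that for every x : Fin n → F and every z : Fin β → F such that x d ≠ 0 for some d ∈ D, the row vector Matrix.vecMul (Sum.elim x z) G is nonzero. Then the rank of G equals the cardinality of D plus the rank of the submatrix G' of G obtained by deleting the rows indexed by Sum.inl d for d ∈ D (i.e., G restricted to the rows indexed by {i : Fin n ⊕ Fin β | ∀ d ∈ D, i ≠ Sum.inl d}). -/
/-!
The hypothesis says that no linear relation among the rows of `G` involves a demanded row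
`Sum.inl d`, `d ∈ D`. Hence the demanded rows stay linearly independent modulo the span `W` of
the remaining rows, so the row space of `G` is the direct sum of `W` and a `|D|`-dimensional
space spanned by the demanded rows.
-/

open Module Submodule Set

section RankSplitting

variable {K V : Type*} [DivisionRing K] [AddCommGroup V] [Module K V]

theorem finrank_span_sup_eq_card_add_of_linearIndependent_mkQ {ι : Type*} [Fintype ι]
    {u : ι → V} {W : Submodule K V} [FiniteDimensional K W]
    (hu : LinearIndependent K (W.mkQ ∘ u)) :
    finrank K ↥(span K (range u) ⊔ W) = Fintype.card ι + finrank K W := by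
  have := FiniteDimensional.span_of_finite K (finite_range u)
  have hdisj : span K (range u) ⊓ W = ⊥ := by
    simpa [disjoint_iff] using Submodule.range_ker_disjoint hu
  have hdim := Submodule.finrank_sup_add_finrank_inf_eq (span K (range u)) W
  rwa [hdisj, finrank_bot, add_zero, finrank_span_eq_card hu.of_comp] at hdim

theorem linearIndependent_mkQ_span_compl {ι : Type*} [Fintype ι] {v : ι → V} {s : Set ι}
    (hv : ∀ c : ι → K, ∑ i, c i • v i = 0 → ∀ i ∈ s, c i = 0) :
    LinearIndependent K ((span K (v '' sᶜ)).mkQ ∘ fun i : s => v i) := by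
  classical
  rw [Fintype.linearIndependent_iff]
  intro a ha
  have hmem : ∑ i : s, a i • v i ∈ span K (range fun j : ↥sᶜ => v j) := by
    rw [← image_eq_range, ← Submodule.Quotient.mk_eq_zero, ← mkQ_apply, map_sum]
    simpa only [map_smul, Function.comp_apply] using ha
  obtain ⟨b, hb⟩ := (mem_span_range_iff_exists_fun K).1 hmem
  let c : ι → K := fun i => if h : i ∈ s then a ⟨i, h⟩ else -b ⟨i, h⟩
  have hc_in : ∑ i : s, c i • v i = ∑ i : s, a i • v i :=
    Finset.sum_congr rfl fun i _ => by simp [c, i.2]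
  have hc_out : ∑ i : {i // i ∉ s}, c i • v i = -∑ j : ↥sᶜ, b j • v j := by
    rw [← Finset.sum_neg_distrib]
    exact Finset.sum_congr rfl fun i _ => by simp [c, i.2]
  have hc : ∑ i, c i • v i = 0 := by
    rw [← Fintype.sum_subtype_add_sum_subtype (· ∈ s), hc_in, hc_out, hb, add_neg_cancel]
  intro i
  simpa [c] using hv c hc i i.2

theorem finrank_span_range_eq_ncard_add {ι : Type*} [Fintype ι] {v : ι → V} {s : Set ι}
    (hv : ∀ c : ι → K, ∑ i, c i • v i = 0 → ∀ i ∈ s, c i = 0) :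
    finrank K (span K (range v)) = s.ncard + finrank K (span K (v '' sᶜ)) := by
  classical
  have := FiniteDimensional.span_of_finite K ((toFinite sᶜ).image v)
  have hsplit : range v = range (fun i : s => v i) ∪ v '' sᶜ := by
    rw [← image_eq_range, ← image_union, union_compl_self, image_univ]
  rw [hsplit, span_union,
    finrank_span_sup_eq_card_add_of_linearIndependent_mkQ (linearIndependent_mkQ_span_compl hv),
    ← Nat.card_eq_fintype_card, Nat.card_coe_set_eq]

end RankSplitting

/-- Rank additivity at a sink: if every message vector that is nonzero on the demanded
coordinates `D` gives a nonzero sink output, then the rank of the stacked transfer matrix `G`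
equals `|D|` plus the rank of the submatrix of `G` obtained by deleting the rows indexed by
`Sum.inl d` for `d ∈ D`. -/
theorem stmt_1 (F : Type*) [Field F] (n β m : ℕ) (D : Finset (Fin n))
    (G : Matrix (Fin n ⊕ Fin β) (Fin m) F)
    (h : ∀ (x : Fin n → F) (z : Fin β → F), (∃ d ∈ D, x d ≠ 0) →
      Matrix.vecMul (Sum.elim x z) G ≠ 0) :
    G.rank = D.card +
      (G.submatrix
        (fun i : {i : Fin n ⊕ Fin β // ∀ d ∈ D, i ≠ Sum.inl d} => (i : Fin n ⊕ Fin β))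
        id).rank := by
  have hrows : ∀ c : Fin n ⊕ Fin β → F, ∑ i, c i • G i = 0 →
      ∀ i ∈ Sum.inl '' (D : Set (Fin n)), c i = 0 := by
    rintro c hc _ ⟨d, hd, rfl⟩
    by_contra hcd
    refine h (c ∘ Sum.inl) (c ∘ Sum.inr) ⟨d, hd, hcd⟩ ?_
    rwa [Sum.elim_comp_inl_inr, Matrix.vecMul_eq_sum]
  have hcompl :
      (Sum.inl '' (D : Set (Fin n)))ᶜ = {i : Fin n ⊕ Fin β | ∀ d ∈ D, i ≠ Sum.inl d} := by
    ext i
    simp [eq_comm]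
  rw [Matrix.rank_eq_finrank_span_row, Matrix.rank_eq_finrank_span_row,
    finrank_span_range_eq_ncard_add (v := G.row) hrows, hcompl,
    Set.ncard_image_of_injective _ Sum.inl_injective, Set.ncard_coe_finset, image_eq_range]
  rfl
end

section
/- Let F be a field, let n and N be natural numbers, let A : Matrix (Fin n) (Fin N) F, and let i : Fin N be such that the i-th column of A is nonzero and lies in the F-linear span of the remaining columns {fun k => A k j | j ≠ i}. Define B : Matrix (Fin n ⊕ Unit) (Fin N ⊕ Unit) F by B (Sum.inl k) (Sum.inl j) = A k j, B (Sum.inl k) (Sum.inr u) = 0, B (Sum.inr u) (Sum.inl j) = if j = i then 1 else 0, and B (Sum.inr u) (Sum.inr u') = 1. Let MA be a matroid on Fin N with MA.E = Set.univ such that for every S : Set (Fin N), MA.Indep S holds if and only if the family of columns of A indexed by S is linearly independent over F; let MB be a matroid on Fin N ⊕ Unit with MB.E = Set.univ satisfying the analogous property for the columns of B. Then: (a) {Sum.inl i, Sum.inr ()} is a circuit of the dual matroid MB✶; and (b) MB ／ {Sum.inr ()} = MA.map Sum.inl (mapping along the injection Sum.inl). In other words, the column matroid of B is the series extension of the column matroid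 of A obtained by adding the new element in series with column i. -/
/-!
Write `c` for the columns of `B` and `e = c (inr ())` for the last unit vector. Forgetting the last
coordinate is a linear map with kernel `F ∙ e` that sends `c (inl j)` to the `j`-th column of `A`,
so contracting the nonloop `inr ()` gives the column matroid of `A`.

A set is coindependent iff its complement spans. The last coordinate vanishes on every column
except `c (inl i)` and `e`, so the complement of `{inl i, inr ()}` does not span. On the other hand
`c (inl i) - e` is column `i` of `A` extended by zero, which lies in the span of the other extended
columns; hence removing only one of `inl i`, `inr ()` leaves a spanning set.
-/

open Set Submodule
open scoped Matroid

namespace Matroid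

variable {ι V W F : Type*} [Field F] [AddCommGroup V] [Module F V] [AddCommGroup W] [Module F W]
  {M : Matroid ι} {v : ι → V}

lemma isBase_iff_of_forall_indep_iff (hM : ∀ S, M.Indep S ↔ LinearIndepOn F v S) {B : Set ι} :
    M.IsBase B ↔ LinearIndepOn F v B ∧ range v ⊆ span F (v '' B) := by
  rw [isBase_iff_maximal_indep]
  constructor
  · rintro ⟨hB, hmax⟩
    refine ⟨(hM B).1 hB, ?_⟩
    rintro _ ⟨j, rfl⟩
    by_contra hj
    have hjB : j ∉ B := fun h ↦ hj (subset_span (mem_image_of_mem v h))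
    have hins : M.Indep (insert j B) := (hM _).2 ((linearIndepOn_insert hjB).2 ⟨(hM B).1 hB, hj⟩)
    exact hjB (hmax hins (subset_insert j B) (mem_insert j B))
  · rintro ⟨hB, hsp⟩
    refine ⟨(hM B).2 hB, fun I hI hBI j hjI ↦ by_contra fun hjB ↦ ?_⟩
    exact ((hM I).1 hI).notMem_span hjI
      (span_mono (image_mono (subset_sdiff_singleton hBI hjB)) (hsp (mem_range_self j)))

lemma spanning_iff_of_forall_indep_iff (hE : M.E = univ)
    (hM : ∀ S, M.Indep S ↔ LinearIndepOn F v S) {S : Set ι} :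
    M.Spanning S ↔ range v ⊆ span F (v '' S) := by
  rw [spanning_iff_exists_isBase_subset (hE ▸ subset_univ S)]
  constructor
  · rintro ⟨B, hB, hBS⟩
    exact ((isBase_iff_of_forall_indep_iff hM).1 hB).2.trans (span_mono (image_mono hBS))
  · intro hS
    obtain ⟨B, hBS, -, hSB, hB⟩ :=
      exists_linearIndepOn_extension (linearIndepOn_empty F v) (empty_subset S)
    exact ⟨B, (isBase_iff_of_forall_indep_iff hM).2 ⟨hB, hS.trans (span_le.2 hSB)⟩, hBS⟩

lemma dual_indep_iff_of_forall_indep_iff (hE : M.E = univ)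
    (hM : ∀ S, M.Indep S ↔ LinearIndepOn F v S) {X : Set ι} :
    M✶.Indep X ↔ range v ⊆ span F (v '' Xᶜ) := by
  rw [← coindep_def, coindep_iff_compl_spanning (hE ▸ subset_univ X), hE, ← compl_eq_univ_sdiff,
    spanning_iff_of_forall_indep_iff hE hM]

lemma contract_singleton_indep_iff_of_ker_eq (hM : ∀ S, M.Indep S ↔ LinearIndepOn F v S)
    {a : ι} (ha : v a ≠ 0) {τ : V →ₗ[F] W} (hker : LinearMap.ker τ = F ∙ v a) {I : Set ι} :
    (M ／ {a}).Indep I ↔ a ∉ I ∧ LinearIndepOn F (τ ∘ v) I := by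
  have hna : M.IsNonloop a :=
    indep_singleton.1 ((hM _).2 ((linearIndepOn_singleton_iff F).2 ha))
  rw [hna.contractElem_indep_iff]
  refine and_congr_right fun haI ↦ ?_
  rw [hM, linearIndepOn_insert haI, ← disjoint_span_singleton' ha, ← hker]
  refine ⟨fun ⟨hI, hdisj⟩ ↦ ?_, fun h ↦ ⟨h.of_comp τ, ?_⟩⟩
  · exact (τ.linearIndepOn_iff_of_injOn (τ.injOn_of_disjoint_ker le_rfl hdisj)).2 hI
  · simpa [image_eq_range] using Submodule.range_ker_disjoint h

end Matroid

lemma LinearMap.ker_funLeft_inl {m R : Type*} [Semiring R] :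
    LinearMap.ker (LinearMap.funLeft R R (Sum.inl : m → m ⊕ Unit)) =
      R ∙ (Sum.elim 0 1 : m ⊕ Unit → R) := by
  ext x
  simp only [LinearMap.mem_ker, mem_span_singleton]
  constructor
  · intro hx
    refine ⟨x (Sum.inr ()), funext fun k ↦ ?_⟩
    rcases k with k | u
    · simpa using (congrFun hx k).symm
    · simp
  · rintro ⟨a, rfl⟩
    ext k
    simp

namespace Matrix

variable {m n R : Type*} [DecidableEq n]

def seriesExtension [Zero R] [One R] (A : Matrix m n R) (i : n) :
    Matrix (m ⊕ Unit) (n ⊕ Unit) R :=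
  fromBlocks A 0 (of fun _ j ↦ if j = i then 1 else 0) (of fun _ _ ↦ 1)

section Entries

variable [Zero R] [One R] (A : Matrix m n R) (i : n)

@[simp] lemma seriesExtension_inl_inl (k : m) (j : n) :
    A.seriesExtension i (Sum.inl k) (Sum.inl j) = A k j := rfl

@[simp] lemma seriesExtension_inl_inr (k : m) (u : Unit) :
    A.seriesExtension i (Sum.inl k) (Sum.inr u) = 0 := rfl

@[simp] lemma seriesExtension_inr_inl (u : Unit) (j : n) :
    A.seriesExtension i (Sum.inr u) (Sum.inl j) = if j = i then 1 else 0 := rfl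

@[simp] lemma seriesExtension_inr_inr (u u' : Unit) :
    A.seriesExtension i (Sum.inr u) (Sum.inr u') = 1 := rfl

end Entries

variable {F : Type*} [Field F] (A : Matrix m n F) (i : n)

lemma seriesExtension_col_inr (u : Unit) :
    (A.seriesExtension i).col (Sum.inr u) = (Sum.elim 0 1 : m ⊕ Unit → F) := by
  ext (k | u') <;> simp

lemma span_seriesExtension_compl_pair_le_ker :
    span F ((A.seriesExtension i).col '' {Sum.inl i, Sum.inr ()}ᶜ) ≤
      LinearMap.ker (LinearMap.proj (Sum.inr ())) := by
  refine span_le.2 ?_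
  rintro _ ⟨j | u, hj, rfl⟩
  · simp_all
  · simp at hj

variable {A i}

lemma range_seriesExtension_subset_span (hspan : A.col i ∈ span F (A.col '' {i}ᶜ))
    {T : Set (n ⊕ Unit)} (hT : Sum.inl '' {i}ᶜ ⊆ T) (hiT : Sum.inl i ∈ T ∨ Sum.inr () ∈ T) :
    range (A.seriesExtension i).col ⊆ span F ((A.seriesExtension i).col '' T) := by
  set c := (A.seriesExtension i).col
  set U := span F (c '' T)
  let Φ : (m → F) →ₗ[F] (m ⊕ Unit → F) := LinearMap.pi (Sum.elim LinearMap.proj 0)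
  have hc (j : n) :
      c (Sum.inl j) = Φ (A.col j) + (if j = i then (1 : F) else 0) • c (Sum.inr ()) := by
    ext (k | u) <;> split_ifs <;> simp_all [c, Φ]
  have hΦ : ∀ j ≠ i, Φ (A.col j) ∈ U := fun j hj ↦ by
    simpa [hc j, hj] using subset_span (mem_image_of_mem c (hT (mem_image_of_mem Sum.inl hj)))
  have hΦi : Φ (A.col i) ∈ U := by
    have := mem_map_of_mem (f := Φ) hspan
    rw [map_span, ← image_comp] at this
    exact span_le.2 (by rintro _ ⟨j, hj, rfl⟩; exact hΦ j hj) this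
  have he : c (Sum.inr ()) ∈ U := by
    rcases hiT with h | h
    · simpa [hc i] using sub_mem (subset_span (mem_image_of_mem c h)) hΦi
    · exact subset_span (mem_image_of_mem c h)
  rintro _ ⟨j | u, rfl⟩
  · rw [hc j]
    refine add_mem ?_ (smul_mem _ _ he)
    by_cases hj : j = i
    · exact hj ▸ hΦi
    · exact hΦ j hj
  · exact he

end Matrix

namespace Matroid

variable {m n F : Type*} [DecidableEq n] [Field F] {A : Matrix m n F} {i : n}

theorem dual_isCircuit_inl_inr_of_seriesExtension {M : Matroid (n ⊕ Unit)} (hE : M.E = univ)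
    (hM : ∀ S, M.Indep S ↔ LinearIndepOn F (A.seriesExtension i).col S)
    (hspan : A.col i ∈ span F (A.col '' {i}ᶜ)) :
    M✶.IsCircuit {Sum.inl i, Sum.inr ()} := by
  have hne : (Sum.inl i : n ⊕ Unit) ≠ Sum.inr () := Sum.inl_ne_inr
  rw [isCircuit_iff_dep_forall_sdiff_singleton_indep, dep_iff,
    dual_indep_iff_of_forall_indep_iff hE hM]
  refine ⟨⟨fun h ↦ ?_, by simp [hE]⟩, ?_⟩
  · have := Matrix.span_seriesExtension_compl_pair_le_ker A i (h (mem_range_self (Sum.inr ())))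
    simp at this
  · rintro _ (rfl | rfl)
    · rw [pair_sdiff_left hne, dual_indep_iff_of_forall_indep_iff hE hM]
      exact Matrix.range_seriesExtension_subset_span hspan (by simp) (Or.inl hne)
    · rw [pair_sdiff_right hne, dual_indep_iff_of_forall_indep_iff hE hM]
      exact Matrix.range_seriesExtension_subset_span hspan (by simp) (Or.inr hne.symm)

theorem contract_inr_eq_map_inl_of_seriesExtension {MA : Matroid n} {MB : Matroid (n ⊕ Unit)}
    (hMAE : MA.E = univ) (hMA : ∀ S, MA.Indep S ↔ LinearIndepOn F A.col S)
    (hMBE : MB.E = univ) (hMB : ∀ S, MB.Indep S ↔ LinearIndepOn F (A.seriesExtension i).col S) :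
    MB ／ {Sum.inr ()} = MA.map Sum.inl Sum.inl_injective.injOn := by
  have hground : (MB ／ {Sum.inr ()}).E = range Sum.inl := by
    ext (j | u) <;> simp [hMBE]
  refine ext_indep (by rw [hground, map_ground, hMAE, image_univ]) fun I hI ↦ ?_
  obtain ⟨S, rfl⟩ : ∃ S, Sum.inl '' S = I := subset_range_iff_exists_image_eq.1 (hground ▸ hI)
  have he : (A.seriesExtension i).col (Sum.inr ()) ≠ 0 := by
    rw [Matrix.seriesExtension_col_inr]
    exact fun h ↦ one_ne_zero (congrFun h (Sum.inr ()))
  have hker : LinearMap.ker (LinearMap.funLeft F F Sum.inl) =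
      F ∙ (A.seriesExtension i).col (Sum.inr ()) := by
    rw [Matrix.seriesExtension_col_inr, LinearMap.ker_funLeft_inl]
  rw [contract_singleton_indep_iff_of_ker_eq hMB he hker,
    map_image_indep_iff (hMAE ▸ subset_univ S), hMA]
  rw [and_iff_right (by simp)]
  exact ⟨fun h ↦ h.comp_of_image Sum.inl_injective.injOn, fun h ↦ h.image_of_comp Sum.inl _⟩

end Matroid

theorem stmt_5_general (F : Type*) [Field F] (n N : ℕ) (A : Matrix (Fin n) (Fin N) F) (i : Fin N)
    (hspan : (fun k => A k i) ∈
      Submodule.span F {v : Fin n → F | ∃ j, j ≠ i ∧ v = fun k => A k j})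
    (B : Matrix (Fin n ⊕ Unit) (Fin N ⊕ Unit) F)
    (hB₁ : ∀ k j, B (Sum.inl k) (Sum.inl j) = A k j)
    (hB₂ : ∀ k u, B (Sum.inl k) (Sum.inr u) = 0)
    (hB₃ : ∀ u j, B (Sum.inr u) (Sum.inl j) = if j = i then 1 else 0)
    (hB₄ : ∀ u u', B (Sum.inr u) (Sum.inr u') = 1)
    (MA : Matroid (Fin N)) (hMAE : MA.E = Set.univ)
    (hMA : ∀ S : Set (Fin N),
      MA.Indep S ↔ LinearIndependent F (fun j : S => fun k => A k (j : Fin N)))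
    (MB : Matroid (Fin N ⊕ Unit)) (hMBE : MB.E = Set.univ)
    (hMB : ∀ S : Set (Fin N ⊕ Unit),
      MB.Indep S ↔ LinearIndependent F (fun c : S => fun k => B k (c : Fin N ⊕ Unit))) :
    (MB✶).IsCircuit {Sum.inl i, Sum.inr ()} ∧
    MB ／ {Sum.inr ()} = MA.map Sum.inl Sum.inl_injective.injOn := by
  obtain rfl : B = A.seriesExtension i := by
    ext (k | u) (j | u') <;> simp [hB₁, hB₂, hB₃, hB₄]
  have hcols : A.col '' {i}ᶜ = {v | ∃ j, j ≠ i ∧ v = fun k => A k j} := by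
    ext v
    simp [eq_comm, Matrix.col_apply']
  have hspan_col : A.col i ∈ span F (A.col '' {i}ᶜ) := by rwa [hcols]
  exact ⟨Matroid.dual_isCircuit_inl_inr_of_seriesExtension hMBE hMB hspan_col,
    Matroid.contract_inr_eq_map_inl_of_seriesExtension hMAE hMA hMBE hMB⟩

/-- The matrix construction for a series extension: if column `i` of `A` is nonzero and lies in
the span of the remaining columns, and `B` is obtained from `A` by adjoining a new all-zero
column and a new row having a `1` in column `i` and in the new column and `0` elsewhere, then
the column matroid of `B` is the series extension of the column matroid of `A` by the new
element in series with `i`: the pair `{i, new}` is a circuit of the dual of the column matroid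
of `B`, and contracting the new element recovers the column matroid of `A`. -/
theorem stmt_5 (F : Type*) [Field F] (n N : ℕ) (A : Matrix (Fin n) (Fin N) F) (i : Fin N)
    (hi : (fun k => A k i) ≠ (0 : Fin n → F))
    (hspan : (fun k => A k i) ∈
      Submodule.span F {v : Fin n → F | ∃ j, j ≠ i ∧ v = fun k => A k j})
    (B : Matrix (Fin n ⊕ Unit) (Fin N ⊕ Unit) F)
    (hB₁ : ∀ k j, B (Sum.inl k) (Sum.inl j) = A k j)
    (hB₂ : ∀ k u, B (Sum.inl k) (Sum.inr u) = 0)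
    (hB₃ : ∀ u j, B (Sum.inr u) (Sum.inl j) = if j = i then 1 else 0)
    (hB₄ : ∀ u u', B (Sum.inr u) (Sum.inr u') = 1)
    (MA : Matroid (Fin N)) (hMAE : MA.E = Set.univ)
    (hMA : ∀ S : Set (Fin N),
      MA.Indep S ↔ LinearIndependent F (fun j : S => fun k => A k (j : Fin N)))
    (MB : Matroid (Fin N ⊕ Unit)) (hMBE : MB.E = Set.univ)
    (hMB : ∀ S : Set (Fin N ⊕ Unit),
      MB.Indep S ↔ LinearIndependent F (fun c : S => fun k => B k (c : Fin N ⊕ Unit))) :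
    (MB✶).IsCircuit {Sum.inl i, Sum.inr ()} ∧
    MB ／ {Sum.inr ()} = MA.map Sum.inl Sum.inl_injective.injOn :=
  stmt_5_general F n N A i hspan B hB₁ hB₂ hB₃ hB₄ MA hMAE hMA MB hMBE hMB
end

section
/- Let K be a field, let k be a natural number, let ι be a finite type, let A : ι → (Fin k → K) be a family of vectors (the columns of a matrix over K), and let F ⊆ ι be a flat of the column matroid of A, i.e., F = {j : ι | A j ∈ Submodule.span K (A '' F)}. Then there exist a field L, a ring homomorphism φ : K →+* L, and a vector v : Fin k → L such that for every subset X ⊆ ι: v ∈ Submodule.span L ((fun j => fun t => φ (A j t)) '' X) if and only if F ⊆ {j : ι | A j ∈ Submodule.span K (A '' X)}. (This realizes the principal single-element extension of the column matroid of A generated by the flat F as a column matroid over an extension field of K.) -/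
/-!
Adjoin to `K` transcendentals `t j`, one per column and linearly independent over `K`, and take
`v = ∑ j ∈ F, t j • A j`. If `F` lies in the closure of `X`, then clearly `v ∈ span (A '' X)`.
Conversely, if some `A j` with `j ∈ F` is not in `span K (A '' X)`, a `K`-rational functional `c`
kills `A '' X` but not `A j`; applied to `v` it gives `∑ j ∈ F, c (A j) • t j = 0`, contradicting
the independence of the `t j`.
-/

universe u v

open Matrix

theorem Submodule.exists_dotProduct_ne_zero_of_notMem {K n : Type*} [Field K] [Fintype n]
    {p : Submodule K (n → K)} {w : n → K} (hw : w ∉ p) :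
    ∃ c : n → K, c ⬝ᵥ w ≠ 0 ∧ ∀ u ∈ p, c ⬝ᵥ u = 0 := by
  classical
  obtain ⟨f, hfw, hfp⟩ := p.exists_dual_map_eq_bot_of_notMem hw inferInstance
  have hf : ∀ u, (dotProductEquiv K n).symm f ⬝ᵥ u = f u := fun u => by
    rw [← dotProductEquiv_apply_apply, LinearEquiv.apply_symm_apply]
  refine ⟨(dotProductEquiv K n).symm f, by rwa [hf], fun u hu => ?_⟩
  rw [hf, ← Submodule.mem_bot K, ← hfp]
  exact Submodule.mem_map_of_mem hu

section

variable {K L n : Type*}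

theorem algebraMap_comp_mem_span_of_mem [CommSemiring K] [CommSemiring L] [Algebra K L]
    {S : Set (n → K)} {w : n → K} (hw : w ∈ Submodule.span K S) :
    algebraMap K L ∘ w ∈ Submodule.span L ((algebraMap K L ∘ ·) '' S) := by
  have := Submodule.mem_map_of_mem (f := (AlgHom.compLeft (Algebra.ofId K L) n).toLinearMap) hw
  rw [Submodule.map_span] at this
  exact Submodule.span_le_restrictScalars K L _ this

theorem sum_smul_algebraMap_comp_mem_span_iff [Field K] [CommRing L] [Algebra K L] [Fintype n]
    {ι : Type*} {t : ι → L} (ht : LinearIndependent K t) (A : ι → n → K) (s : Finset ι)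
    (X : Set ι) :
    ∑ j ∈ s, t j • (algebraMap K L ∘ A j) ∈
        Submodule.span L ((fun j => algebraMap K L ∘ A j) '' X) ↔
      ∀ j ∈ s, A j ∈ Submodule.span K (A '' X) := by
  have himage : (fun j => algebraMap K L ∘ A j) '' X = (algebraMap K L ∘ ·) '' (A '' X) :=
    (Set.image_image _ _ _).symm
  rw [himage]
  refine ⟨fun hv => ?_, fun hA => Submodule.sum_mem _ fun j hj =>
    Submodule.smul_mem _ _ (algebraMap_comp_mem_span_of_mem (hA j hj))⟩
  by_contra! ⟨j, hjs, hj⟩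
  obtain ⟨c, hcj, hc⟩ := Submodule.exists_dotProduct_ne_zero_of_notMem hj
  classical
  let g := dotProductEquiv L n (algebraMap K L ∘ c)
  have hg : ∀ u, g (algebraMap K L ∘ u) = algebraMap K L (c ⬝ᵥ u) := fun u => by
    simp only [g, dotProductEquiv_apply_apply, RingHom.map_dotProduct]
  have hspan : Submodule.span L ((algebraMap K L ∘ ·) '' Submodule.span K (A '' X)) ≤
      LinearMap.ker g := by
    rw [Submodule.span_le]
    rintro _ ⟨u, hu, rfl⟩
    rw [SetLike.mem_coe, LinearMap.mem_ker, hg, hc u hu, map_zero]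
  have hsum : ∑ i ∈ s, (c ⬝ᵥ A i) • t i = 0 := by
    have := hspan (Submodule.span_mono (Set.image_mono Submodule.subset_span) hv)
    rw [LinearMap.mem_ker, map_sum] at this
    simp only [map_smul, hg, smul_eq_mul] at this
    simpa only [Algebra.smul_def, mul_comm] using this
  exact hcj (linearIndependent_iff'.mp ht s _ hsum j hjs)

end

theorem MvPolynomial.linearIndependent_algebraMap_X_fractionRing (K : Type*) [Field K]
    (σ : Type*) :
    LinearIndependent K fun i : σ =>
      algebraMap (MvPolynomial σ K) (FractionRing (MvPolynomial σ K)) (X i) := by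
  let ψ := IsScalarTower.toAlgHom K (MvPolynomial σ K) (FractionRing (MvPolynomial σ K))
  have hψ : Function.Injective ψ := IsFractionRing.injective _ _
  exact (linearIndependent_X σ K).map' ψ.toLinearMap (LinearMap.ker_eq_bot.mpr hψ)

theorem stmt_7_general (K : Type u) [Field K] (k : ℕ) (ι : Type v) [Fintype ι]
    (A : ι → (Fin k → K)) (F : Set ι) :
    ∃ (L : Type u) (_ : Field L) (φ : K →+* L) (v : Fin k → L),
      ∀ X : Set ι,
        v ∈ Submodule.span L ((fun j => fun t => φ (A j t)) '' X) ↔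
          F ⊆ {j : ι | A j ∈ Submodule.span K (A '' X)} := by
  classical
  -- Variables indexed by `Fin (card ι)` rather than `ι` keep `L` in the universe of `K`.
  let L := FractionRing (MvPolynomial (Fin (Fintype.card ι)) K)
  let t : ι → L := fun j =>
    algebraMap (MvPolynomial _ K) L (MvPolynomial.X (Fintype.equivFin ι j))
  have ht : LinearIndependent K t :=
    (MvPolynomial.linearIndependent_algebraMap_X_fractionRing K _).comp _
      (Fintype.equivFin ι).injective
  refine ⟨L, inferInstance, algebraMap K L,
    ∑ j ∈ F.toFinset, t j • (algebraMap K L ∘ A j), fun X => ?_⟩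
  refine (sum_smul_algebraMap_comp_mem_span_iff ht A F.toFinset X).trans ?_
  simp only [Set.mem_toFinset, Set.subset_def, Set.mem_ofPred_eq]

/-- The principal extension of a representable matroid generated by a flat is representable
over an extension field: given columns `A : ι → (Fin k → K)` and a flat `F` of the associated
column matroid, there are a field `L`, an embedding `φ : K →+* L` and a new column
`v : Fin k → L` such that `v` lies in the span of the (transported) columns indexed by `X`
exactly when `F` is contained in the closure of `X` in the column matroid of `A`. -/
theorem stmt_7 (K : Type u) [Field K] (k : ℕ) (ι : Type v) [Fintype ι]
    (A : ι → (Fin k → K)) (F : Set ι)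
    (hF : F = {j : ι | A j ∈ Submodule.span K (A '' F)}) :
    ∃ (L : Type u) (_ : Field L) (φ : K →+* L) (v : Fin k → L),
      ∀ X : Set ι,
        v ∈ Submodule.span L ((fun j => fun t => φ (A j t)) '' X) ↔
          F ⊆ {j : ι | A j ∈ Submodule.span K (A '' X)} :=
  stmt_7_general K k ι A F
end

section
/- Let K and L be fields with L a K-algebra, let M and k be natural numbers, and let b : Basis (Fin M) K L be a K-basis of L. Let S be a set of vectors in Fin k → K, for each r : Fin M let S_r be a set of vectors in Fin k → K, and let v : Fin M → (Fin k → K) be such that for every r : Fin M, v r ∈ Submodule.span K S and v r ∉ Submodule.span K (S_r). Define w : Fin k → L by w t = ∑ r, (algebraMap K L (v r t)) * b r. Then w ∈ Submodule.span L ((fun u => fun t => algebraMap K L (u t)) '' S), and for every r : Fin M, w ∉ Submodule.span L ((fun u => fun t => algebraMap K L (u t)) '' S_r). -/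
/-!
Write `φ u = algebraMap K L ∘ u`. Then `w = ∑ r, b r • φ (v r)`, and `φ` carries `K`-spans
into `L`-spans, which gives the first claim. For the second, reading off the `r`-th
`b`-coordinate entrywise is `K`-linear, sends `w` to `v r`, and sends the `L`-span of `φ '' T`
into the `K`-span of `T`: that `L`-span is the `K`-span of the vectors `b i • φ u` with
`u ∈ T`, whose `r`-th coordinate is `0` or `u`.
-/

section

variable {K L ι : Type*} [CommSemiring K] [Semiring L] [Algebra K L]

theorem algebraMap_comp_mem_span_image {S : Set (ι → K)} {u : ι → K}
    (hu : u ∈ Submodule.span K S) :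
    (fun t => algebraMap K L (u t)) ∈
      Submodule.span L ((fun u => fun t => algebraMap K L (u t)) '' S) := by
  have hmap := Submodule.mem_map_of_mem (f := (Algebra.linearMap K L).compLeft ι) hu
  rw [← Submodule.span_image] at hmap
  exact Submodule.span_le_restrictScalars K L _ hmap

theorem basis_repr_comp_mem_span_of_mem_span_image {κ : Type*} (b : Module.Basis κ K L)
    (r : κ) {T : Set (ι → K)} {x : ι → L}
    (hx : x ∈ Submodule.span L ((fun u => fun t => algebraMap K L (u t)) '' T)) :
    (fun t => b.repr (x t) r) ∈ Submodule.span K T := by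
  rw [← Submodule.restrictScalars_mem K, ← Submodule.span_smul_of_span_eq_top b.span_eq] at hx
  refine (Submodule.span_le (p := (Submodule.span K T).comap ((b.coord r).compLeft ι))).mpr
    ?_ hx
  rintro _ ⟨_, ⟨i, rfl⟩, _, ⟨u, hu, rfl⟩, rfl⟩
  have hcoord : (b.coord r).compLeft ι (b i • fun t => algebraMap K L (u t)) =
      Finsupp.single i (1 : K) r • u := by
    ext t
    rw [LinearMap.compLeft_apply, Function.comp_apply, Pi.smul_apply, smul_eq_mul,
      ← Algebra.commutes, ← Algebra.smul_def, Module.Basis.coord_apply, map_smul, b.repr_self,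
      Finsupp.smul_apply, Pi.smul_apply, smul_eq_mul, smul_eq_mul, mul_comm]
  rw [SetLike.mem_coe, Submodule.mem_comap, hcoord]
  exact Submodule.smul_mem _ _ (Submodule.subset_span hu)

end

/-- Key step in the representability of principal extensions: if each `v r` lies in the
`K`-span of `S` but not in the `K`-span of `S_r`, then the vector
`w t = ∑ r, (v r t) • b r` over the extension field `L` (with `K`-basis `b`) lies in the
`L`-span of the transported set `S` but in none of the `L`-spans of the transported sets
`S_r`. -/
theorem stmt_8 (K L : Type*) [Field K] [Field L] [Algebra K L] (M k : ℕ)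
    (b : Module.Basis (Fin M) K L) (S : Set (Fin k → K)) (Sr : Fin M → Set (Fin k → K))
    (v : Fin M → (Fin k → K))
    (hv : ∀ r : Fin M, v r ∈ Submodule.span K S ∧ v r ∉ Submodule.span K (Sr r))
    (w : Fin k → L)
    (hw : ∀ t, w t = ∑ r : Fin M, algebraMap K L (v r t) * b r) :
    w ∈ Submodule.span L ((fun u => fun t => algebraMap K L (u t)) '' S) ∧
    ∀ r : Fin M, w ∉ Submodule.span L ((fun u => fun t => algebraMap K L (u t)) '' (Sr r)) := by
  have hw_sum : w = ∑ r, b r • fun t => algebraMap K L (v r t) := by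
    ext t
    simp [hw, mul_comm]
  have hw_repr : ∀ r, (fun t => b.repr (w t) r) = v r := by
    intro r
    ext t
    simp_rw [hw, ← Algebra.smul_def, b.repr_sum_self]
  refine ⟨?_, fun r hr => (hv r).2 ?_⟩
  · rw [hw_sum]
    exact Submodule.sum_mem _ fun r _ =>
      Submodule.smul_mem _ _ (algebraMap_comp_mem_span_image (hv r).1)
  · rw [← hw_repr r]
    exact basis_repr_comp_mem_span_of_mem_span_image b r hr
end

section
/- Let F be a field and let M₁, M₂, M₃, M₄, M₅, M₆, M₇, M₈, P₉, P₁₀, P₁₁, P₁₂, P₁₃, P₁₄ be elements of F satisfying the nine equations: (1) P₉ + M₁*M₅*P₁₀ = 0; (2) M₂*M₅*P₁₀ + M₃*M₆*P₁₀ = 0; (3) M₄*M₆*P₁₀ = 1; (4) M₁*M₅*P₁₁ + M₁*M₇*P₁₂ = 0; (5) M₂*M₅*P₁₁ + M₃*M₆*P₁₁ + M₂*M₇*P₁₂ = 1; (6) M₄*M₆*P₁₁ + M₈*P₁₂ = 0; (7) M₁*M₇*P₁₃ = 1; (8) M₂*M₇*P₁₃ + M₃*P₁₄ = 0; (9) M₈*P₁₃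 + M₄*P₁₄ = 0. Then (1 : F) + 1 = 0, i.e., F has characteristic two. -/
/-!
Equations (3) and (7) make `P₁₀`, `M₁`, `P₁₃` and `M₄` nonzero. Cancelling them, (2), (4) and
(8)–(9) give `M₂ M₅ + M₃ M₆ = 0`, `M₅ P₁₁ + M₇ P₁₂ = 0` and `M₂ M₇ M₄ = M₃ M₈`, and then (5)
splits into `M₂ M₇ P₁₂ = 1` and `M₃ M₆ P₁₁ = 1`. Hence
`2 M₄ = M₄ (M₂ M₇ P₁₂ + M₃ M₆ P₁₁) = M₃ (M₈ P₁₂ + M₄ M₆ P₁₁)`, which vanishes by (6).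
-/

theorem one_add_one_eq_zero_of_mul_eq_one_of_mul_eq_one {R : Type*} [CommRing R]
    [NoZeroDivisors R] {a b c d e f x y : R} (hd : d ≠ 0)
    (hx : a * b * x = 1) (hy : c * e * y = 1) (habd : a * b * d = c * f)
    (h : d * e * y + f * x = 0) : (1 : R) + 1 = 0 := by
  have hd2 : d * (1 + 1) = d * 0 :=
    calc d * (1 + 1) = d * (a * b * x + c * e * y) := by rw [hx, hy]
      _ = c * (d * e * y + f * x) := by linear_combination x * habd
      _ = d * 0 := by rw [h, mul_zero, mul_zero]
  exact mul_left_cancel₀ hd hd2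

theorem stmt_10_general (F : Type*) [Field F]
    (M₁ M₂ M₃ M₄ M₅ M₆ M₇ M₈ P₁₀ P₁₁ P₁₂ P₁₃ P₁₄ : F)
    (h2 : M₂ * M₅ * P₁₀ + M₃ * M₆ * P₁₀ = 0)
    (h3 : M₄ * M₆ * P₁₀ = 1)
    (h4 : M₁ * M₅ * P₁₁ + M₁ * M₇ * P₁₂ = 0)
    (h5 : M₂ * M₅ * P₁₁ + M₃ * M₆ * P₁₁ + M₂ * M₇ * P₁₂ = 1)
    (h6 : M₄ * M₆ * P₁₁ + M₈ * P₁₂ = 0)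
    (h7 : M₁ * M₇ * P₁₃ = 1)
    (h8 : M₂ * M₇ * P₁₃ + M₃ * P₁₄ = 0)
    (h9 : M₈ * P₁₃ + M₄ * P₁₄ = 0) :
    (1 : F) + 1 = 0 := by
  have hM₁ : M₁ ≠ 0 := fun h => by simp [h] at h7
  have hM₄ : M₄ ≠ 0 := fun h => by simp [h] at h3
  have hP₁₀ : P₁₀ ≠ 0 := fun h => by simp [h] at h3
  have hP₁₃ : P₁₃ ≠ 0 := fun h => by simp [h] at h7
  have h2' : M₂ * M₅ + M₃ * M₆ = 0 := mul_right_cancel₀ hP₁₀ (by linear_combination h2)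
  have h4' : M₅ * P₁₁ + M₇ * P₁₂ = 0 := mul_left_cancel₀ hM₁ (by linear_combination h4)
  have h89 : M₂ * M₇ * M₄ = M₃ * M₈ :=
    mul_right_cancel₀ hP₁₃ (by linear_combination M₄ * h8 - M₃ * h9)
  have hP₁₂ : M₂ * M₇ * P₁₂ = 1 := by linear_combination h5 - P₁₁ * h2'
  have hP₁₁ : M₃ * M₆ * P₁₁ = 1 := by linear_combination h5 - M₂ * h4'
  exact one_add_one_eq_zero_of_mul_eq_one_of_mul_eq_one hM₄ hP₁₂ hP₁₁ h89 h6

/-- The nine consistency conditions for a scalar linear single-edge network-error detecting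
code on the network `Ñ₁` force the field to have characteristic two. -/
theorem stmt_10 (F : Type*) [Field F]
    (M₁ M₂ M₃ M₄ M₅ M₆ M₇ M₈ P₉ P₁₀ P₁₁ P₁₂ P₁₃ P₁₄ : F)
    (h1 : P₉ + M₁ * M₅ * P₁₀ = 0)
    (h2 : M₂ * M₅ * P₁₀ + M₃ * M₆ * P₁₀ = 0)
    (h3 : M₄ * M₆ * P₁₀ = 1)
    (h4 : M₁ * M₅ * P₁₁ + M₁ * M₇ * P₁₂ = 0)
    (h5 : M₂ * M₅ * P₁₁ + M₃ * M₆ * P₁₁ + M₂ * M₇ * P₁₂ = 1)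
    (h6 : M₄ * M₆ * P₁₁ + M₈ * P₁₂ = 0)
    (h7 : M₁ * M₇ * P₁₃ = 1)
    (h8 : M₂ * M₇ * P₁₃ + M₃ * P₁₄ = 0)
    (h9 : M₈ * P₁₃ + M₄ * P₁₄ = 0) :
    (1 : F) + 1 = 0 :=
  stmt_10_general F M₁ M₂ M₃ M₄ M₅ M₆ M₇ M₈ P₁₀ P₁₁ P₁₂ P₁₃ P₁₄ h2 h3 h4 h5 h6 h7 h8 h9
end

section
/- Let F be a field, let n, m, β be natural numbers, let j : Fin n, let G : Matrix (Fin n) (Fin m) F and H : Matrix (Fin β) (Fin m) F. Suppose there exists a matrix Ā : Matrix (Fin m) (Fin (β + 1)) F such that: (i) every column of G * Ā equals the standard basis vector Pi.single j (1 : F), i.e., (G * Ā) i c = (if i = j then 1 else 0) for all i : Fin n and c : Fin (β + 1); and (ii) the matrix Q : Matrix (Unit ⊕ Fin β) (Fin (β + 1)) F defined by Q (Sum.inl u) c = 1 and Q (Sum.inr r) c = (H * Ā) r c has rank β + 1. Then the vector Sum.elim (Pi.single j (1 : F)) 0 : (Fin n ⊕ Fin β) → F lies in the F-linear span of the set of columns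 of the stacked matrix T : Matrix (Fin n ⊕ Fin β) (Fin m) F given by T (Sum.inl i) c = G i c and T (Sum.inr r) c = H r c. -/
/-!
Full rank of the stacked matrix `[1; H Ā]` (with `β + 1` rows) makes it surjective, so some
`y` has `∑ y = 1` and `H Ā y = 0`. Then `z = Ā y` satisfies `G z = (∑ y) eⱼ = eⱼ` and
`H z = 0`, i.e. `[G; H] z` is the stacked basis vector.
-/

namespace Matrix

variable {K : Type*} [Field K] {ι κ m n : Type*} [Fintype m] [Fintype n]

theorem mulVec_surjective_of_rank_eq_card_height [Fintype ι] (A : Matrix ι n K)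
    (hA : A.rank = Fintype.card ι) : Function.Surjective A.mulVec :=
  LinearMap.range_eq_top.mp <| Submodule.eq_top_of_finrank_eq <| by
    change A.rank = _
    rw [hA, Module.finrank_fintype_fun_eq_card]

theorem mulVec_mem_span_range_col (A : Matrix ι n K) (v : n → K) :
    A *ᵥ v ∈ Submodule.span K (Set.range A.col) :=
  A.range_mulVecLin ▸ LinearMap.mem_range_self A.mulVecLin v

theorem sum_elim_mem_span_range_col_fromRows (G : Matrix ι n K) (H : Matrix κ n K) {e : ι → K}
    {z : n → K} (hG : G *ᵥ z = e) (hH : H *ᵥ z = 0) :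
    Sum.elim e 0 ∈ Submodule.span K (Set.range (fromRows G H).col) := by
  rw [← hG, ← hH, ← fromRows_mulVec]
  exact mulVec_mem_span_range_col _ z

theorem mul_mulVec_of_forall_mul_apply_eq (G : Matrix ι m K) (A : Matrix m n K) {e : ι → K}
    (hGA : ∀ i c, (G * A) i c = e i) (y : n → K) :
    G *ᵥ (A *ᵥ y) = (∑ c, y c) • e := by
  ext i
  rw [mulVec_mulVec]
  simp only [mulVec, dotProduct, hGA, ← Finset.mul_sum, Pi.smul_apply, smul_eq_mul, mul_comm]

end Matrix

open Matrix in
/-- The multiple-unicast decoding criterion: if there is a matrix `Abar` whose columns all turn the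
source-to-sink transfer matrix `G` into the demanded basis vector `Pi.single j 1`, and such that
the matrix obtained by stacking an all-ones row on top of `H * Abar` has full rank `β + 1`, then
the stacked basis vector `Sum.elim (Pi.single j 1) 0` lies in the span of the columns of the
stacked matrix `[G; H]`. -/
theorem stmt_11 (F : Type*) [Field F] (n m β : ℕ) (j : Fin n)
    (G : Matrix (Fin n) (Fin m) F) (H : Matrix (Fin β) (Fin m) F)
    (h : ∃ Abar : Matrix (Fin m) (Fin (β + 1)) F,
      (∀ (i : Fin n) (c : Fin (β + 1)), (G * Abar) i c = if i = j then 1 else 0) ∧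
      (Matrix.of fun (r : Unit ⊕ Fin β) (c : Fin (β + 1)) =>
          Sum.elim (fun _ : Unit => (1 : F)) (fun r' : Fin β => (H * Abar) r' c) r).rank
        = β + 1) :
    (Sum.elim (Pi.single j (1 : F)) 0 : Fin n ⊕ Fin β → F) ∈
      Submodule.span F (Set.range fun c : Fin m =>
        (Sum.elim (fun i => G i c) (fun r => H r c) : Fin n ⊕ Fin β → F)) := by
  obtain ⟨Abar, hGA, hrank⟩ := h
  have hQ : (Matrix.of fun (r : Unit ⊕ Fin β) (c : Fin (β + 1)) =>
      Sum.elim (fun _ : Unit => (1 : F)) (fun r' : Fin β => (H * Abar) r' c) r) =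
      fromRows (of fun _ _ => 1) (H * Abar) := by
    ext (r | r) c <;> rfl
  obtain ⟨y, hy⟩ := mulVec_surjective_of_rank_eq_card_height _
    (hrank.trans (by simp [add_comm])) (Sum.elim 1 0)
  rw [hQ, fromRows_mulVec, Sum.elim_eq_iff] at hy
  have hsum : ∑ c, y c = 1 := by simpa [mulVec, dotProduct] using congrFun hy.1 ()
  have hG : G *ᵥ (Abar *ᵥ y) = Pi.single j 1 := by
    rw [mul_mulVec_of_forall_mul_apply_eq G Abar (e := Pi.single j 1)
      (fun i c => by rw [hGA, Pi.single_apply]), hsum, one_smul]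
  have hH : H *ᵥ (Abar *ᵥ y) = 0 := by rw [mulVec_mulVec, hy.2]
  convert sum_elim_mem_span_range_col_fromRows G H hG hH using 3
  ext c (i | r) <;> rfl
end
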